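/- Let S and A be finite nonempty sets, P : S → A → (S → ℝ) a transition kernel with P s a a probability mass function, r : S → A → ℝ with values in [0,1], and 0 ≤ γ ≤ c < 1. Define the Bellman iterates V₀ = 0 and V_{i+1}(s) = max_{a} (r s a + γ ∑_{u} P s a u · V_i(u)), and the metric iterates d₀ = 0 and d_{i+1}(s,s') = max_{a} ((1-c)|r s a - r s' a| + c · W₁(P s a, P s' a; d_i)), where W₁(μ,ν;d) denotes the 1-Wasserstein distance between finitely supported distributions μ, ν with ground metric d. Then for all i and all s, s' ∈ S: (1-c)|V_i(s) - V_i(s')| ≤ d_i(s,s'). -/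
import Mathlib


/-- A probability mass function on a finite type. -/
def IsPMF {S : Type*} [Fintype S] (μ : S → ℝ) : Prop :=
  (∀ s, 0 ≤ μ s) ∧ ∑ s, μ s = 1

/-- A coupling of two probability mass functions on a finite type. -/
def IsCoupling {S : Type*} [Fintype S] (π : S → S → ℝ) (μ ν : S → ℝ) : Prop :=
  (∀ x y, 0 ≤ π x y) ∧ (∀ x, ∑ y, π x y = μ x) ∧ (∀ y, ∑ x, π x y = ν y)

/-- The 1-Wasserstein distance between finitely supported distributions,
defined as the infimum of expected ground cost over couplings. -/
noncomputable def W1 {S : Type*} [Fintype S] (μ ν : S → ℝ) (e : S → S → ℝ) : ℝ :=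
  sInf { w : ℝ | ∃ π : S → S → ℝ, IsCoupling π μ ν ∧ w = ∑ x, ∑ y, π x y * e x y }

lemma coupling_prod {S : Type*} [Fintype S] {μ ν : S → ℝ} (hμ : IsPMF μ) (hν : IsPMF ν) :
    IsCoupling (fun x y => μ x * ν y) μ ν := by
  refine ⟨fun x y => mul_nonneg (hμ.1 x) (hν.1 y), fun x => ?_, fun y => ?_⟩
  · rw [← Finset.mul_sum, hν.2, mul_one]
  · rw [← Finset.sum_mul, hμ.2, one_mul]

lemma le_W1 {S : Type*} [Fintype S] {μ ν : S → ℝ} {e : S → S → ℝ} {t : ℝ}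
    (hμ : IsPMF μ) (hν : IsPMF ν)
    (h : ∀ π : S → S → ℝ, IsCoupling π μ ν → t ≤ ∑ x, ∑ y, π x y * e x y) :
    t ≤ W1 μ ν e :=
  le_csInf ⟨_, _, coupling_prod hμ hν, rfl⟩ (by rintro w ⟨π, hπ, rfl⟩; exact h π hπ)

lemma W1_symm {S : Type*} [Fintype S] {μ ν : S → ℝ} {e : S → S → ℝ}
    (he : ∀ x y, e x y = e y x) : W1 μ ν e = W1 ν μ e := by
  unfold W1
  congr 1
  ext w
  constructor
  · rintro ⟨π, ⟨hnn, hm1, hm2⟩, rfl⟩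
    refine ⟨fun x y => π y x, ⟨fun x y => hnn y x, hm2, hm1⟩, ?_⟩
    rw [Finset.sum_comm]
    exact Finset.sum_congr rfl fun x _ => Finset.sum_congr rfl fun y _ => by rw [he x y]
  · rintro ⟨π, ⟨hnn, hm1, hm2⟩, rfl⟩
    refine ⟨fun x y => π y x, ⟨fun x y => hnn y x, hm2, hm1⟩, ?_⟩
    rw [Finset.sum_comm]
    exact Finset.sum_congr rfl fun x _ => Finset.sum_congr rfl fun y _ => by rw [he x y]

/-- the Bellman value iterates are Lipschitz with respect to the
bisimulation metric iterates: `(1-c)|V_i(s) - V_i(s')| ≤ d_i(s,s')`. -/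
theorem value_iterates_le_bisim_iterates
    {S A : Type*} [Fintype S] [Fintype A] [Nonempty S] [Nonempty A]
    (P : S → A → S → ℝ) (hP : ∀ s a, IsPMF (P s a))
    (r : S → A → ℝ) (hr : ∀ s a, r s a ∈ Set.Icc (0:ℝ) 1)
    (γ c : ℝ) (hγ0 : 0 ≤ γ) (hγc : γ ≤ c) (hc1 : c < 1)
    (V : ℕ → S → ℝ) (d : ℕ → S → S → ℝ)
    (hV0 : ∀ s, V 0 s = 0)
    (hVsucc : ∀ i s, V (i+1) s = Finset.univ.sup' Finset.univ_nonempty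
        (fun a => r s a + γ * ∑ u, P s a u * V i u))
    (hd0 : ∀ s s', d 0 s s' = 0)
    (hdsucc : ∀ i s s', d (i+1) s s' = Finset.univ.sup' Finset.univ_nonempty
        (fun a => (1 - c) * |r s a - r s' a| + c * W1 (P s a) (P s' a) (d i))) :
    ∀ i (s s' : S), (1 - c) * |V i s - V i s'| ≤ d i s s' := by
  have hc0 : 0 ≤ c := le_trans hγ0 hγc
  -- d is nonnegative
  have hdnn : ∀ i s s', 0 ≤ d i s s' := by
    intro i
    induction i with
    | zero => intro s s'; rw [hd0]
    | succ i ih =>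
      intro s s'
      rw [hdsucc]
      refine le_trans ?_ (Finset.le_sup' _ (Finset.mem_univ (Classical.arbitrary A)))
      have hW : (0:ℝ) ≤ W1 (P s (Classical.arbitrary A)) (P s' (Classical.arbitrary A)) (d i) := by
        refine le_W1 (hP s _) (hP s' _) ?_
        rintro π ⟨hnn, -, -⟩
        exact Finset.sum_nonneg fun x _ => Finset.sum_nonneg fun y _ =>
          mul_nonneg (hnn x y) (ih x y)
      have h1 : (0:ℝ) ≤ (1 - c) * |r s (Classical.arbitrary A) - r s' (Classical.arbitrary A)| :=
        mul_nonneg (by linarith) (abs_nonneg _)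
      have h2 : (0:ℝ) ≤ c * W1 (P s (Classical.arbitrary A)) (P s' (Classical.arbitrary A)) (d i) :=
        mul_nonneg hc0 hW
      linarith
  -- d is symmetric
  have hdsymm : ∀ i s s', d i s s' = d i s' s := by
    intro i
    induction i with
    | zero => intro s s'; rw [hd0, hd0]
    | succ i ih =>
      intro s s'
      rw [hdsucc, hdsucc]
      refine Finset.sup'_congr _ rfl fun a _ => ?_
      rw [abs_sub_comm, W1_symm ih]
  -- one-sided inequality
  have key : ∀ i s s', (1 - c) * (V i s - V i s') ≤ d i s s' := by
    intro i
    induction i with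
    | zero => intro s s'; rw [hd0, hV0, hV0]; simp
    | succ i ih =>
      intro s s'
      rw [hVsucc, hVsucc, hdsucc]
      obtain ⟨a, -, ha⟩ := Finset.exists_mem_eq_sup' Finset.univ_nonempty
        (fun a => r s a + γ * ∑ u, P s a u * V i u)
      have hle : Finset.univ.sup' Finset.univ_nonempty
            (fun a => r s a + γ * ∑ u, P s a u * V i u)
          - Finset.univ.sup' Finset.univ_nonempty
            (fun a => r s' a + γ * ∑ u, P s' a u * V i u)
          ≤ (r s a + γ * ∑ u, P s a u * V i u) - (r s' a + γ * ∑ u, P s' a u * V i u) := by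
        have := Finset.le_sup' (fun a => r s' a + γ * ∑ u, P s' a u * V i u)
          (Finset.mem_univ a)
        rw [ha]
        linarith [this]
      refine le_trans ?_ (Finset.le_sup'
        (fun a => (1 - c) * |r s a - r s' a| + c * W1 (P s a) (P s' a) (d i))
        (Finset.mem_univ a))
      set Δ : ℝ := (∑ u, P s a u * V i u) - (∑ u, P s' a u * V i u) with hΔ
      have hWlb : (1 - c) * Δ ≤ W1 (P s a) (P s' a) (d i) := by
        refine le_W1 (hP s a) (hP s' a) ?_
        rintro π ⟨hnn, hm1, hm2⟩
        have hΔeq : Δ = ∑ x, ∑ y, π x y * (V i x - V i y) := by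
          have e1 : ∑ x, ∑ y, π x y * (V i x - V i y)
              = (∑ x, ∑ y, π x y * V i x) - (∑ x, ∑ y, π x y * V i y) := by
            simp [mul_sub, Finset.sum_sub_distrib]
          have e2 : (∑ x, ∑ y, π x y * V i x) = ∑ x, P s a x * V i x := by
            refine Finset.sum_congr rfl fun x _ => ?_
            rw [← Finset.sum_mul, hm1 x]
          have e3 : (∑ x, ∑ y, π x y * V i y) = ∑ y, P s' a y * V i y := by
            rw [Finset.sum_comm]
            refine Finset.sum_congr rfl fun y _ => ?_
            rw [← Finset.sum_mul, hm2 y]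
          rw [e1, e2, e3, hΔ]
        rw [hΔeq, Finset.mul_sum]
        refine Finset.sum_le_sum fun x _ => ?_
        rw [Finset.mul_sum]
        refine Finset.sum_le_sum fun y _ => ?_
        rw [mul_comm ((1:ℝ) - c), mul_assoc]
        refine mul_le_mul_of_nonneg_left ?_ (hnn x y)
        calc (V i x - V i y) * (1 - c) = (1 - c) * (V i x - V i y) := mul_comm _ _
          _ ≤ d i x y := ih x y
      have hWnn : (0:ℝ) ≤ W1 (P s a) (P s' a) (d i) := by
        refine le_W1 (hP s a) (hP s' a) ?_
        rintro π ⟨hnn, -, -⟩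
        exact Finset.sum_nonneg fun x _ => Finset.sum_nonneg fun y _ =>
          mul_nonneg (hnn x y) (hdnn i x y)
      have hγΔ : γ * ((1 - c) * Δ) ≤ c * W1 (P s a) (P s' a) (d i) := by
        calc γ * ((1 - c) * Δ) ≤ γ * W1 (P s a) (P s' a) (d i) :=
              mul_le_mul_of_nonneg_left hWlb hγ0
          _ ≤ c * W1 (P s a) (P s' a) (d i) := mul_le_mul_of_nonneg_right hγc hWnn
      have habs : r s a - r s' a ≤ |r s a - r s' a| := le_abs_self _
      have hc1' : (0:ℝ) ≤ 1 - c := by linarith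
      calc (1 - c) * (Finset.univ.sup' Finset.univ_nonempty
              (fun a => r s a + γ * ∑ u, P s a u * V i u)
            - Finset.univ.sup' Finset.univ_nonempty
              (fun a => r s' a + γ * ∑ u, P s' a u * V i u))
          ≤ (1 - c) * ((r s a - r s' a) + γ * Δ) := by
            refine mul_le_mul_of_nonneg_left ?_ hc1'
            rw [hΔ]; linarith [hle]
        _ = (1 - c) * (r s a - r s' a) + γ * ((1 - c) * Δ) := by ring
        _ ≤ (1 - c) * |r s a - r s' a| + c * W1 (P s a) (P s' a) (d i) := by
            have := mul_le_mul_of_nonneg_left habs hc1'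
            linarith
  intro i s s'
  rcases le_total (V i s) (V i s') with h | h
  · rw [abs_of_nonpos (by linarith)]
    have := key i s' s
    rw [hdsymm i s' s] at this
    linarith
  · rw [abs_of_nonneg (by linarith)]
    exact key i s s'
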